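/- arXiv:1703.00414 — 7 statements merged into one kernel-verified Lean document; each statement's English description precedes it below -/
import Mathlib

section
/- Let p be an odd prime and let A = {x_1, ..., x_n} be a finite set of nonzero vectors in F_p^2 which spans all p+1 nonzero directions from the origin, i.e., for every nonzero vector v in F_p^2 there exist an index i and a nonzero scalar t in F_p such that x_i = t·v. Then there exists a nonempty subset I of {1, ..., n} such that the sum over i in I of x_i equals (0,0). -/
/-!
Work in the group ring `ℤ[F_p²]` and write `[x]` for `single x 1`. If `A` had no nonempty
zero-sum subset, then `∏_{x ∈ A} (1 - [x])` would have coefficient `1` at `0`, since only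
`B = ∅` contributes. But choosing `x_v = t_v • v ∈ A` on each line, with `v = (0,1)` or
`v = (1,m)`, `1 - [v]` divides `1 - [x_v]`, so this product is divisible by
`(1 - [(0,1)]) ∏_m (1 - [(1,m)])`, which vanishes: expanding `∏_m (1 - [(1,m)])` over subsets
`S ⊆ F_p`, translating the `k`-subsets by `1/k` (for `0 < k < p`) shifts `∑ S` by `1`, so their
terms are fixed by multiplication with `[(0,1)]`, while the terms of `S = ∅` and `S = F_p`
cancel because `p` is odd.
-/

open Finset AddMonoidAlgebra

namespace AddMonoidAlgebra

variable {R G : Type*} [CommRing R] [AddCommMonoid G]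

theorem prod_one_sub_single {ι : Type*} (s : Finset ι) (f : ι → G) :
    ∏ i ∈ s, (1 - single (f i) (1 : R)) =
      ∑ t ∈ s.powerset, single (∑ i ∈ t, f i) ((-1) ^ #t) := by
  simp_rw [sub_eq_add_neg, ← single_neg, prod_one_add, prod_single, prod_const]

theorem one_sub_single_dvd_one_sub_single_nsmul (v : G) (n : ℕ) :
    1 - single v (1 : R) ∣ 1 - single (n • v) 1 := by
  simpa [single_pow] using one_sub_dvd_one_sub_pow (single v (1 : R)) n

theorem one_sub_single_dvd_one_sub_single_smul {p : ℕ} [NeZero p] {V : Type*} [AddCommGroup V]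
    [Module (ZMod p) V] (v : V) (t : ZMod p) :
    1 - single v (1 : R) ∣ 1 - single (t • v) 1 := by
  rw [← ZMod.natCast_zmod_val t, Nat.cast_smul_eq_nsmul]
  exact one_sub_single_dvd_one_sub_single_nsmul v t.val

theorem exists_nonempty_sum_eq_zero_of_prod_one_sub_single_eq_zero [Nontrivial R]
    {A : Finset G} (h : ∏ x ∈ A, (1 - single x (1 : R)) = 0) :
    ∃ B ⊆ A, B.Nonempty ∧ ∑ x ∈ B, x = 0 := by
  by_contra! hA
  have hcoeff := congrArg (fun y : R[G] ↦ y.coeff 0) h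
  simp only [prod_one_sub_single, coeff_sum, coeff_single, Finsupp.coe_finsetSum,
    Finset.sum_apply, coeff_zero, Finsupp.coe_zero, Pi.zero_apply] at hcoeff
  rw [sum_eq_single_of_mem ∅ (empty_mem_powerset A)] at hcoeff
  · simp at hcoeff
  · intro B hB hB0
    exact Finsupp.single_eq_of_ne
      (hA B (mem_powerset.mp hB) (nonempty_iff_ne_empty.mpr hB0)).symm

end AddMonoidAlgebra

theorem Finset.sum_powersetCard_univ_sum_add_nsmul {α M : Type*} [Fintype α] [AddCommGroup α]
    [AddCommMonoid M] (k : ℕ) (c : α) (f : α → M) :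
    ∑ S ∈ powersetCard k (univ : Finset α), f (∑ x ∈ S, x + k • c) =
      ∑ S ∈ powersetCard k (univ : Finset α), f (∑ x ∈ S, x) := by
  let e : α ↪ α := (Equiv.addRight c).toEmbedding
  calc ∑ S ∈ powersetCard k univ, f (∑ x ∈ S, x + k • c)
      = ∑ S ∈ powersetCard k univ, f (∑ x ∈ S.map e, x) := by
        refine sum_congr rfl fun S hS ↦ ?_
        rw [sum_map, ← (mem_powersetCard.mp hS).2, ← sum_const, ← sum_add_distrib]
        rfl
    _ = ∑ S ∈ powersetCard k (univ.map e), f (∑ x ∈ S, x) := by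
        rw [powersetCard_map, sum_map]
        rfl
    _ = ∑ S ∈ powersetCard k univ, f (∑ x ∈ S, x) := by
        rw [map_univ_equiv]

namespace ZMod

variable {p : ℕ} [Fact p.Prime]

theorem sum_univ_eq_zero (hodd : Odd p) : ∑ x : ZMod p, x = 0 := by
  have h3 : 1 < Fintype.card (ZMod p) - 1 := by
    have := (Fact.out : p.Prime).two_le
    have : p ≠ 2 := fun h ↦ by subst h; norm_num at hodd
    rw [ZMod.card]
    omega
  simpa using FiniteField.sum_pow_lt_card_sub_one (ZMod p) 1 h3

theorem one_sub_single_mul_prod_one_sub_single_eq_zero {R : Type*} [CommRing R]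
    (hodd : Odd p) :
    (1 - single ((0 : ZMod p), (1 : ZMod p)) (1 : R)) *
      ∏ m : ZMod p, (1 - single ((1 : ZMod p), m) 1) = 0 := by
  set g := single ((0 : ZMod p), (1 : ZMod p)) (1 : R)
  let F : ℕ → R[ZMod p × ZMod p] := fun k ↦
    ∑ S ∈ powersetCard k (univ : Finset (ZMod p)),
      single ((k : ZMod p), ∑ m ∈ S, m) ((-1) ^ k)
  have hP : ∏ m : ZMod p, (1 - single ((1 : ZMod p), m) (1 : R)) =
      ∑ k ∈ range (p + 1), F k := by
    rw [prod_one_sub_single, sum_powerset, card_univ, ZMod.card]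
    refine sum_congr rfl fun k _ ↦ sum_congr rfl fun S hS ↦ ?_
    have hsum : ∑ m ∈ S, ((1 : ZMod p), m) = ((#S : ZMod p), ∑ m ∈ S, m) :=
      Prod.ext (by simp [Prod.fst_sum]) (by simp [Prod.snd_sum])
    rw [hsum, (mem_powersetCard.mp hS).2]
  have hF : ∀ k : ℕ, (k : ZMod p) ≠ 0 → (1 - g) * F k = 0 := by
    intro k hk
    rw [sub_mul, one_mul, sub_eq_zero, eq_comm, mul_sum]
    calc ∑ S ∈ powersetCard k univ, g * single ((k : ZMod p), ∑ m ∈ S, m) ((-1) ^ k)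
        = ∑ S ∈ powersetCard k univ,
            single ((k : ZMod p), ∑ m ∈ S, m + k • (k : ZMod p)⁻¹) ((-1) ^ k) := by
          refine sum_congr rfl fun S _ ↦ ?_
          rw [single_mul_single, nsmul_eq_mul, mul_inv_cancel₀ hk]
          simp [add_comm]
      _ = F k := sum_powersetCard_univ_sum_add_nsmul _ _ fun s ↦ single ((k : ZMod p), s) _
  have hends : F 0 + F p = 0 := by
    have huniv : powersetCard p (univ : Finset (ZMod p)) = {univ} := by
      simpa [ZMod.card] using powersetCard_self (univ : Finset (ZMod p))
    simp [F, huniv, sum_univ_eq_zero hodd, hodd.neg_one_pow, single_neg]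
  rw [hP, mul_sum, sum_eq_add_of_mem 0 p (by simp) (by simp) (Fact.out : p.Prime).ne_zero.symm,
    ← mul_add, hends, mul_zero]
  intro k hk ⟨hk0, hkp⟩
  refine hF k fun h ↦ ?_
  rw [ZMod.natCast_eq_zero_iff] at h
  have := Nat.le_of_dvd (Nat.pos_of_ne_zero hk0) h
  rw [mem_range] at hk
  omega

end ZMod

section LineRep

variable {p : ℕ}

def lineRep : Option (ZMod p) → ZMod p × ZMod p
  | none => (0, 1)
  | some m => (1, m)

variable [Fact p.Prime]

theorem lineRep_ne_zero (o : Option (ZMod p)) : lineRep o ≠ 0 := by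
  cases o <;> simp [lineRep]

theorem eq_of_smul_lineRep_eq {o o' : Option (ZMod p)} {t t' : ZMod p} (ht : t ≠ 0)
    (h : t • lineRep o = t' • lineRep o') : o = o' := by
  cases o <;> cases o' <;> simp only [lineRep, Prod.smul_mk, smul_eq_mul, mul_zero, mul_one,
    Prod.mk.injEq, reduceCtorEq, Option.some.injEq] at h ⊢
  · exact ht (by rw [h.2, ← h.1, zero_mul])
  · exact ht h.1
  · obtain ⟨rfl, h⟩ := h
    exact mul_left_cancel₀ ht h

theorem prod_one_sub_single_lineRep {R : Type*} [CommRing R] (hodd : Odd p) :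
    ∏ o : Option (ZMod p), (1 - single (lineRep o) (1 : R)) = 0 := by
  rw [Fintype.prod_option]
  exact ZMod.one_sub_single_mul_prod_one_sub_single_eq_zero hodd

end LineRep

theorem zero_sum_subset_of_all_directions_general (p : ℕ) (hp : p.Prime) (hodd : Odd p)
    (A : Finset (ZMod p × ZMod p))
    (hdir : ∀ v : ZMod p × ZMod p, v ≠ (0, 0) →
      ∃ x ∈ A, ∃ t : ZMod p, t ≠ 0 ∧ x = t • v) :
    ∃ B ⊆ A, B.Nonempty ∧ ∑ x ∈ B, x = (0, 0) := by
  have := Fact.mk hp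
  choose x hxA t ht hxt using fun o ↦ hdir (lineRep o) (lineRep_ne_zero o)
  have hx : Function.Injective x := fun o o' h ↦
    eq_of_smul_lineRep_eq (ht o) (by rw [← hxt, ← hxt, h])
  have hdvd :
      ∏ o, (1 - single (lineRep o) 1 : ℤ[ZMod p × ZMod p]) ∣ ∏ y ∈ A, (1 - single y 1) :=
    calc ∏ o, (1 - single (lineRep o) 1 : ℤ[ZMod p × ZMod p])
        ∣ ∏ o, (1 - single (x o) 1) := prod_dvd_prod_of_dvd _ _ fun o _ ↦ by
          rw [hxt]
          exact one_sub_single_dvd_one_sub_single_smul _ _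
      _ = ∏ y ∈ univ.map ⟨x, hx⟩, (1 - single y 1) :=
          (prod_map univ ⟨x, hx⟩ fun y ↦ 1 - single y 1).symm
      _ ∣ ∏ y ∈ A, (1 - single y 1) := prod_dvd_prod_of_subset _ _ _ (by simpa [subset_iff])
  rw [prod_one_sub_single_lineRep hodd, zero_dvd_iff] at hdvd
  exact exists_nonempty_sum_eq_zero_of_prod_one_sub_single_eq_zero hdvd

/-- **Theorem 1.** Let `p` be an odd prime and let `A ⊆ F_p² \ {(0,0)}` be a set of
nonzero vectors spanning all `p + 1` nonzero directions from the origin (i.e. for every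
nonzero `v ∈ F_p²` there are `x ∈ A` and `t ≠ 0` with `x = t • v`).  Then `A` has a
nonempty subset with zero sum. -/
theorem zero_sum_subset_of_all_directions (p : ℕ) (hp : p.Prime) (hodd : Odd p)
    (A : Finset (ZMod p × ZMod p))
    (hA0 : ∀ x ∈ A, x ≠ (0, 0))
    (hdir : ∀ v : ZMod p × ZMod p, v ≠ (0, 0) →
      ∃ x ∈ A, ∃ t : ZMod p, t ≠ 0 ∧ x = t • v) :
    ∃ B ⊆ A, B.Nonempty ∧ ∑ x ∈ B, x = (0, 0) :=
  zero_sum_subset_of_all_directions_general p hp hodd A hdir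
end

section
/- Let p be an odd prime. The polynomial f in F_p[x_1, ..., x_{p+1}] defined by f(x_1, ..., x_{p+1}) = (x_1 + x_2 + ... + x_p)^{p-1} · (x_1 + 2x_2 + 3x_3 + ... + p·x_p + x_{p+1})^{p-1} contains no monomial with nonzero coefficient in which all of the variables x_1, ..., x_{p+1} appear with positive exponent. Equivalently, for every monomial x_1^{c_1}···x_{p+1}^{c_{p+1}} whose coefficient in f is nonzero, there exists some index K with c_K = 0. -/
/-!
Write `f = L₁ ^ (p - 1) * L₂ ^ (p - 1)` with `L₁ = ∑ aᵢ xᵢ` and `L₂ = ∑ cᵢ xᵢ`. For every exponent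
vector `d` of total degree `m + n`,
`(∏ dᵢ!) · [x^d] (L₁ ^ m * L₂ ^ n) = m! n! · [yⁿ] ∏ (aᵢ + cᵢ y) ^ dᵢ`.
The linear factors `aᵢ + cᵢ y` are `y` (for `x_{p+1}`) and `1 + t y` for `t` running once
over `𝔽_p`, so their product is `y (1 - y ^ (p - 1)) = y - y ^ p`. If every `dᵢ ≥ 1`, pulling
out one copy of each factor gives `∏ (aᵢ + cᵢ y) ^ dᵢ = (y - y ^ p) Q` with
`deg Q ≤ ∑ (dᵢ - 1) = p - 3`, so the coefficient of `y ^ (p - 1)` vanishes; and `∏ dᵢ!` is a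
unit because every `dᵢ ≤ p - 2`.
-/

open Finset
open scoped Nat

theorem Nat.prod_add_factorial_mul_multinomial_mul_multinomial {σ : Type*} (s : Finset σ)
    (α β : σ → ℕ) :
    (∏ i ∈ s, (α i + β i)!) * multinomial s α * multinomial s β =
      (∑ i ∈ s, α i)! * (∑ i ∈ s, β i)! * ∏ i ∈ s, (α i + β i).choose (β i) := by
  rw [← multinomial_spec s α, ← multinomial_spec s β]
  simp only [← add_choose_mul_factorial_mul_factorial (α _) (β _), prod_mul_distrib]
  ring

theorem Polynomial.coeff_prod {ι R : Type*} [CommSemiring R] [DecidableEq ι] (s : Finset ι)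
    (f : ι → Polynomial R) (n : ℕ) :
    (∏ i ∈ s, f i).coeff n = ∑ l ∈ s.finsuppAntidiag n, ∏ i ∈ s, (f i).coeff (l i) := by
  rw [← coeff_coe, ← coeToPowerSeries.ringHom_apply, map_prod, PowerSeries.coeff_prod]
  simp only [coeToPowerSeries.ringHom_apply, coeff_coe]

open Polynomial in
theorem Polynomial.coeff_C_add_C_mul_X_pow {R : Type*} [CommSemiring R] (a c : R) (e k : ℕ) :
    ((C a + C c * X) ^ e).coeff k = e.choose k * a ^ (e - k) * c ^ k := by
  rw [add_comm, add_pow, finsetSum_coeff]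
  simp only [mul_pow, ← C_pow, ← C_eq_natCast, coeff_mul_C, coeff_C_mul_X_pow, ite_mul,
    zero_mul]
  rw [sum_ite_eq (range (e + 1))]
  split_ifs with hk
  · ring
  · rw [Nat.choose_eq_zero_of_lt (by simpa [Nat.lt_succ_iff] using hk)]
    simp

theorem Finsupp.sum_antidiagonal_ite_degree_eq {σ M : Type*} [Fintype σ] [DecidableEq σ]
    [AddCommMonoid M] (d : σ →₀ ℕ) (n : ℕ) (g : (σ →₀ ℕ) → M)
    (hg : ∀ β, ¬ β ≤ d → g β = 0) :
    ∑ x ∈ antidiagonal d, (if x.2.degree = n then g x.2 else 0) =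
      ∑ β ∈ univ.finsuppAntidiag n, g β := by
  refine sum_bij_ne_zero (fun x _ _ => x.2) (fun x _ hx => ?_) (fun x hx _ y hy _ hxy => ?_)
    (fun β hβ hgβ => ?_) (fun x _ hx => if_pos (ite_ne_right_iff.mp hx).1)
  · rw [mem_finsuppAntidiag, ← degree_eq_sum]
    exact ⟨(ite_ne_right_iff.mp hx).1, subset_univ _⟩
  · rw [HasAntidiagonal.mem_antidiagonal] at hx hy
    exact Prod.ext (add_right_cancel (b := x.2) (by rw [hx, hxy, hy])) hxy
  · have hle : β ≤ d := by_contra fun h => hgβ (hg β h)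
    have hdeg : β.degree = n := by simpa [degree_eq_sum] using hβ
    exact ⟨(d - β, β), HasAntidiagonal.mem_antidiagonal.mpr (tsub_add_cancel_of_le hle),
      by rwa [if_pos hdeg], rfl⟩

theorem Finsupp.sum_sub_one_add_card_eq_degree {σ : Type*} [Fintype σ] (d : σ →₀ ℕ)
    (hd : ∀ i, d i ≠ 0) : ∑ i, (d i - 1) + Fintype.card σ = d.degree := by
  rw [degree_eq_sum, Fintype.card_eq_sum_ones, ← Finset.sum_add_distrib]
  exact Finset.sum_congr rfl fun i _ => Nat.sub_add_cancel (Nat.pos_of_ne_zero (hd i))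

namespace MvPolynomial

variable {σ R : Type*} [Fintype σ] [CommSemiring R]

theorem coeff_sum_smul_X_pow (a : σ → R) (m : ℕ) (α : σ →₀ ℕ) :
    coeff α ((∑ i, a i • X i) ^ m) =
      if α.degree = m then (Nat.multinomial univ α : R) * ∏ i, a i ^ α i else 0 := by
  rw [coeff_linearCombination_X_pow_of_fintype, Finsupp.multinomial_eq_of_support_subset
    (subset_univ _), Finsupp.prod_fintype _ _ (by simp)]
  rfl

theorem prod_factorial_mul_coeff_mul_coeff (a c : σ → R) {m n : ℕ} {α β : σ →₀ ℕ}
    (h : α.degree + β.degree = m + n) :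
    (∏ i, ((α i + β i)! : R)) *
        (coeff α ((∑ i, a i • X i) ^ m) * coeff β ((∑ i, c i • X i) ^ n)) =
      if β.degree = n then
        m ! * n ! * ∏ i, ((α i + β i).choose (β i) * a i ^ α i * c i ^ β i) else 0 := by
  rw [coeff_sum_smul_X_pow, coeff_sum_smul_X_pow]
  split_ifs with hα hβ hβ
  · have key := congrArg (Nat.cast (R := R))
      (Nat.prod_add_factorial_mul_multinomial_mul_multinomial univ α β)
    rw [← Finsupp.degree_eq_sum, ← Finsupp.degree_eq_sum, hα, hβ] at key
    push_cast at key
    simp only [prod_mul_distrib]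
    calc _ = (∏ i, ((α i + β i)! : R)) * Nat.multinomial univ α * Nat.multinomial univ β *
          ((∏ i, a i ^ α i) * ∏ i, c i ^ β i) := by ring
      _ = _ := by rw [key]; ring
  · simp
  · omega
  · simp

theorem prod_factorial_mul_coeff_pow_mul_pow [DecidableEq σ] (a c : σ → R) {m n : ℕ}
    {d : σ →₀ ℕ} (hd : d.degree = m + n) :
    (∏ i, ((d i)! : R)) * coeff d ((∑ i, a i • X i) ^ m * (∑ i, c i • X i) ^ n) =
      m ! * n ! *
        (∏ i, (Polynomial.C (a i) + Polynomial.C (c i) * Polynomial.X) ^ d i).coeff n := by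
  rw [coeff_mul, mul_sum, Polynomial.coeff_prod, mul_sum]
  simp only [Polynomial.coeff_C_add_C_mul_X_pow]
  rw [← Finsupp.sum_antidiagonal_ite_degree_eq]
  · refine sum_congr rfl fun x hx => ?_
    rw [HasAntidiagonal.mem_antidiagonal] at hx
    subst hx
    simp only [Finsupp.coe_add, Pi.add_apply, add_tsub_cancel_right]
    rw [prod_factorial_mul_coeff_mul_coeff a c (by rwa [← map_add])]
  · intro β hβ
    obtain ⟨i, hi⟩ : ∃ i, d i < β i := by simpa [Finsupp.le_def] using hβ
    rw [prod_eq_zero (mem_univ i) (by rw [Nat.choose_eq_zero_of_lt hi]; simp), mul_zero]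

end MvPolynomial

section FiniteField

open Polynomial

theorem FiniteField.prod_units_X_sub_C {K : Type*} [Field K] [Fintype K] [DecidableEq K] :
    ∏ u : Kˣ, (X - C (u : K)) = X ^ (Fintype.card K - 1) - 1 := by
  classical
  simpa [Lagrange.nodal_eq, Fintype.card_units] using
    Lagrange.nodal_subgroup_eq_X_pow_card_sub_one (⊤ : Subgroup Kˣ)

theorem Fintype.prod_units_eq_prod {K M : Type*} [GroupWithZero K] [Fintype K] [DecidableEq K]
    [CommMonoid M] (f : K → M) (hf : f 0 = 1) : ∏ u : Kˣ, f u = ∏ a : K, f a := by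
  refine Finset.prod_bij_ne_one (fun u _ _ => (u : K)) (by simp) (fun _ _ _ _ _ _ => Units.ext)
    (fun a _ ha => ⟨Units.mk0 a fun h => ha (h ▸ hf), by simp, by simpa using ha, rfl⟩)
    (fun _ _ _ => rfl)

theorem FiniteField.prod_one_add_C_mul_X {K : Type*} [Field K] [Fintype K] :
    ∏ a : K, (1 + C a * X) = 1 - X ^ (Fintype.card K - 1) := by
  classical
  have hfactor (u : Kˣ) : 1 + C (u : K) * X = C (u : K) * (X - C ((-u⁻¹ : Kˣ) : K)) := by
    simp only [Units.val_neg, map_neg, sub_neg_eq_add, mul_add, ← C_mul, Units.mul_inv, C_1]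
    ring
  have hreindex : ∏ u : Kˣ, (X - C ((-u⁻¹ : Kˣ) : K)) = ∏ u : Kˣ, (X - C (u : K)) :=
    Fintype.prod_equiv ((Equiv.inv Kˣ).trans (Equiv.neg Kˣ)) _ _ fun _ => rfl
  rw [← Fintype.prod_units_eq_prod _ (by simp), Finset.prod_congr rfl fun u _ => hfactor u,
    Finset.prod_mul_distrib, hreindex, ← map_prod, ← Units.coe_prod,
    FiniteField.prod_univ_units_id_eq_neg_one, FiniteField.prod_units_X_sub_C]
  simp

end FiniteField

section FormCoeff

open Polynomial

variable (p : ℕ)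

-- The coefficients `aᵢ` and `cᵢ` of `L₁` and `L₂`; the paper's variable `x_{i+1}` is `X i`.
def firstFormCoeff (i : Fin (p + 1)) : ZMod p := if (i : ℕ) < p then 1 else 0

def secondFormCoeff (i : Fin (p + 1)) : ZMod p := ((i + 1 : ℕ) : ZMod p)

variable [Fact p.Prime]

theorem prod_linear_formCoeff :
    ∏ i, (C (firstFormCoeff p i) + C (secondFormCoeff p i) * X) = X - X ^ p := by
  have hbij : Function.Bijective fun i : Fin p => ((i : ℕ) : ZMod p) + 1 := by
    refine (Fintype.bijective_iff_injective_and_card _).mpr ⟨fun i j hij => ?_, by simp⟩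
    have := congrArg ZMod.val (add_right_cancel hij)
    rwa [ZMod.val_cast_of_lt i.isLt, ZMod.val_cast_of_lt j.isLt, Fin.val_inj] at this
  rw [Fin.prod_univ_castSucc]
  simp only [firstFormCoeff, secondFormCoeff, Fin.val_castSucc, Fin.val_last, Fin.is_lt, if_true,
    lt_irrefl, if_false, Nat.cast_add, Nat.cast_one, ZMod.natCast_self, zero_add, map_one,
    map_zero, one_mul]
  rw [Fintype.prod_bijective _ hbij _ (fun a => 1 + C a * X) fun _ => rfl,
    FiniteField.prod_one_add_C_mul_X, ZMod.card, sub_mul, one_mul,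
    pow_sub_one_mul (Fact.out : p.Prime).ne_zero]

theorem coeff_prod_linear_formCoeff_pow_eq_zero (d : Fin (p + 1) → ℕ) (hd : ∀ i, d i ≠ 0)
    (hexcess : ∑ i, (d i - 1) < p - 2) :
    (∏ i, (C (firstFormCoeff p i) + C (secondFormCoeff p i) * X) ^ d i).coeff (p - 1) = 0 := by
  set Q := ∏ i, (C (firstFormCoeff p i) + C (secondFormCoeff p i) * X) ^ (d i - 1)
  have hsplit :
      ∏ i, (C (firstFormCoeff p i) + C (secondFormCoeff p i) * X) ^ d i = (X - X ^ p) * Q := by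
    rw [← prod_linear_formCoeff, ← Finset.prod_mul_distrib]
    refine Finset.prod_congr rfl fun i _ => ?_
    rw [← pow_succ', Nat.sub_add_cancel (Nat.pos_of_ne_zero (hd i))]
  have hQ : Q.natDegree < p - 2 := by
    refine (natDegree_prod_le _ _).trans_lt ((Finset.sum_le_sum fun i _ => ?_).trans_lt hexcess)
    have hlin : (C (firstFormCoeff p i) + C (secondFormCoeff p i) * X).natDegree ≤ 1 := by
      rw [add_comm]; exact natDegree_linear_le
    exact (natDegree_pow_le_of_le _ hlin).trans_eq (mul_one _)
  have hp := (Fact.out : p.Prime).two_le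
  rw [hsplit, sub_mul, coeff_sub, coeff_X_pow_mul', if_neg (by omega),
    show p - 1 = p - 2 + 1 by omega, coeff_X_mul, coeff_eq_zero_of_natDegree_lt hQ, sub_zero]

end FormCoeff

open MvPolynomial

theorem no_full_support_monomial_general (p : ℕ) (hp : p.Prime)
    (f : MvPolynomial (Fin (p + 1)) (ZMod p))
    (hf : f =
      (∑ i ∈ Finset.univ.filter (fun i : Fin (p + 1) => (i : ℕ) < p), X i) ^ (p - 1) *
      (∑ i : Fin (p + 1), C (((i : ℕ) + 1 : ℕ) : ZMod p) * X i) ^ (p - 1)) :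
    ∀ d : Fin (p + 1) →₀ ℕ, MvPolynomial.coeff d f ≠ 0 → ∃ K, d K = 0 := by
  have := Fact.mk hp
  intro d hd
  by_contra! hpos
  have hhom : f.IsHomogeneous (1 * (p - 1) + 1 * (p - 1)) := hf ▸
    ((IsHomogeneous.sum _ _ _ fun i _ => isHomogeneous_X (ZMod p) i).pow _).mul
      ((IsHomogeneous.sum _ _ _ fun i _ => isHomogeneous_C_mul_X _ i).pow _)
  have hdeg : d.degree = (p - 1) + (p - 1) := by
    by_contra hne
    exact hd (hhom.coeff_eq_zero (by rwa [one_mul]))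
  have hexcess := Finsupp.sum_sub_one_add_card_eq_degree d hpos
  rw [Fintype.card_fin] at hexcess
  have hf' : f = (∑ i, firstFormCoeff p i • X i) ^ (p - 1) *
      (∑ i, secondFormCoeff p i • X i) ^ (p - 1) := by
    simp [hf, firstFormCoeff, secondFormCoeff, Finset.sum_filter, ite_smul, smul_eq_C_mul]
  have hfactorial : (∏ i, ((d i)! : ZMod p)) ≠ 0 := Finset.prod_ne_zero_iff.mpr fun i _ => by
    have : d i - 1 ≤ ∑ j, (d j - 1) :=
      Finset.single_le_sum (f := fun j => d j - 1) (fun j _ => Nat.zero_le _) (Finset.mem_univ i)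
    rw [Ne, ZMod.natCast_eq_zero_iff, hp.dvd_factorial]
    omega
  have key := prod_factorial_mul_coeff_pow_mul_pow (firstFormCoeff p) (secondFormCoeff p) hdeg
  rw [← hf', coeff_prod_linear_formCoeff_pow_eq_zero p d hpos (by omega), mul_zero] at key
  exact hd ((mul_eq_zero.mp key).resolve_left hfactorial)

/-- **Lemma 5.** For an odd prime `p`, the polynomial
`f = (x₁ + ⋯ + x_p)^{p-1} · (x₁ + 2x₂ + ⋯ + p·x_p + x_{p+1})^{p-1}` in
`F_p[x₁, …, x_{p+1}]` contains no monomial (with nonzero coefficient) in which all of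
the `p+1` variables appear with positive exponent.  Variables are indexed by
`Fin (p+1)`; the coefficient of `x_i` in the second factor is `i` for `1 ≤ i ≤ p`
and `1` for `x_{p+1}`, i.e. it is `i mod p` throughout (note `p + 1 ≡ 1 [MOD p]`). -/
theorem no_full_support_monomial (p : ℕ) (hp : p.Prime) (hodd : Odd p)
    (f : MvPolynomial (Fin (p + 1)) (ZMod p))
    (hf : f =
      (∑ i ∈ Finset.univ.filter (fun i : Fin (p + 1) => (i : ℕ) < p), X i) ^ (p - 1) *
      (∑ i : Fin (p + 1), C (((i : ℕ) + 1 : ℕ) : ZMod p) * X i) ^ (p - 1)) :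
    ∀ d : Fin (p + 1) →₀ ℕ, MvPolynomial.coeff d f ≠ 0 → ∃ K, d K = 0 :=
  no_full_support_monomial_general p hp f hf
end

section
/- Let p be a prime and let n be an integer with n > 2(p-1). Then for any elements v_1, ..., v_n of F_p^2 (not necessarily distinct), there exists a nonempty subset I of {1, ..., n} such that the sum over i in I of v_i equals (0,0). -/
open MvPolynomial Finset

/-- **Theorem 4.** Let `p` be a prime and let `n > 2(p-1)`.  Then any `n` elements
`v 1, …, v n` of `F_p²` (repetitions allowed) admit a nonempty zero-sum subsequence. -/
theorem zero_sum_subsequence_of_long_sequence (p : ℕ) (hp : p.Prime) (n : ℕ)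
    (hn : n > 2 * (p - 1)) (v : Fin n → ZMod p × ZMod p) :
    ∃ I : Finset (Fin n), I.Nonempty ∧ ∑ i ∈ I, v i = (0, 0) := by
  haveI : Fact p.Prime := ⟨hp⟩
  classical
  -- two polynomials
  set f₁ : MvPolynomial (Fin n) (ZMod p) := ∑ i, C (v i).1 * X i ^ (p - 1) with hf₁
  set f₂ : MvPolynomial (Fin n) (ZMod p) := ∑ i, C (v i).2 * X i ^ (p - 1) with hf₂
  have hdeg : ∀ (w : Fin n → ZMod p),
      (∑ i, C (w i) * X i ^ (p - 1) : MvPolynomial (Fin n) (ZMod p)).totalDegree ≤ p - 1 := by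
    intro w
    refine (totalDegree_finset_sum _ _).trans ?_
    apply Finset.sup_le
    intro i _
    refine (totalDegree_mul _ _).trans ?_
    simp [totalDegree_X_pow]
  have hlt : f₁.totalDegree + f₂.totalDegree < Fintype.card (Fin n) := by
    rw [Fintype.card_fin]
    calc f₁.totalDegree + f₂.totalDegree ≤ (p - 1) + (p - 1) := add_le_add (hdeg _) (hdeg _)
      _ = 2 * (p - 1) := by ring
      _ < n := hn
  have hdvd := char_dvd_card_solutions_of_add_lt p hlt (K := ZMod p) (f₁ := f₁) (f₂ := f₂)
  -- zero is a solution
  have heval : ∀ (x : Fin n → ZMod p) (w : Fin n → ZMod p),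
      eval x (∑ i, C (w i) * X i ^ (p - 1) : MvPolynomial (Fin n) (ZMod p))
        = ∑ i, w i * x i ^ (p - 1) := by
    intro x w; simp
  have hp1 : p - 1 ≠ 0 := Nat.sub_ne_zero_of_lt hp.one_lt
  have h0 : eval (0 : Fin n → ZMod p) f₁ = 0 ∧ eval (0 : Fin n → ZMod p) f₂ = 0 := by
    constructor
    · rw [hf₁, heval]
      exact Finset.sum_eq_zero fun i _ => by simp [zero_pow hp1]
    · rw [hf₂, heval]
      exact Finset.sum_eq_zero fun i _ => by simp [zero_pow hp1]
  -- there is a nonzero solution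
  have hpos : 0 < Fintype.card { x : Fin n → ZMod p // eval x f₁ = 0 ∧ eval x f₂ = 0 } :=
    Fintype.card_pos_iff.mpr ⟨⟨0, h0⟩⟩
  have hone : 1 < Fintype.card { x : Fin n → ZMod p // eval x f₁ = 0 ∧ eval x f₂ = 0 } :=
    lt_of_lt_of_le hp.one_lt (Nat.le_of_dvd hpos hdvd)
  obtain ⟨⟨x, hx1, hx2⟩, hxne⟩ :
      ∃ y : { x : Fin n → ZMod p // eval x f₁ = 0 ∧ eval x f₂ = 0 }, y ≠ ⟨0, h0⟩ :=
    Fintype.exists_ne_of_one_lt_card hone ⟨0, h0⟩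
  have hxne0 : x ≠ 0 := fun h => hxne (Subtype.ext h)
  refine ⟨Finset.univ.filter (fun i => x i ≠ 0), ?_, ?_⟩
  · obtain ⟨i, hi⟩ := Function.ne_iff.mp hxne0
    exact ⟨i, Finset.mem_filter.mpr ⟨Finset.mem_univ i, by simpa using hi⟩⟩
  · have hpow : ∀ i ∈ Finset.univ.filter (fun i => x i ≠ 0), x i ^ (p - 1) = 1 := by
      intro i hi
      exact ZMod.pow_card_sub_one_eq_one (by simpa using hi)
    have key : ∀ (w : Fin n → ZMod p),
        (∑ i, w i * x i ^ (p - 1)) = ∑ i ∈ Finset.univ.filter (fun i => x i ≠ 0), w i := by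
      intro w
      rw [← Finset.sum_filter_add_sum_filter_not Finset.univ (fun i => x i ≠ 0)]
      have h1 : ∑ i ∈ Finset.univ.filter (fun i => x i ≠ 0), w i * x i ^ (p - 1)
          = ∑ i ∈ Finset.univ.filter (fun i => x i ≠ 0), w i :=
        Finset.sum_congr rfl fun i hi => by rw [hpow i hi, mul_one]
      have h2 : ∑ i ∈ Finset.univ.filter (fun i => ¬ x i ≠ 0), w i * x i ^ (p - 1) = 0 := by
        refine Finset.sum_eq_zero fun i hi => ?_
        have : x i = 0 := by simpa using hi
        simp [this, zero_pow hp1]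
      rw [h1, h2, add_zero]
    rw [hf₁, heval, key] at hx1
    rw [hf₂, heval, key] at hx2
    rw [Prod.ext_iff]
    constructor
    · rw [Prod.fst_sum]; simpa using hx1
    · rw [Prod.snd_sum]; simpa using hx2
end

section
/- Let F be a field and let f be a polynomial in F[x_1, ..., x_n] of total degree n such that the coefficient of the monomial x_1·x_2···x_n in f is nonzero. Then there exists a point s = (s_1, ..., s_n) with each s_i in {0, 1} such that f(s) ≠ 0. -/
open MvPolynomial

/-- **Combinatorial Nullstellensatz, special case.**  If `f ∈ F[x₁,…,xₙ]` has total
degree `n` and the coefficient of `x₁⋯xₙ` in `f` is nonzero, then `f` does not vanish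
on `{0,1}ⁿ`. -/
theorem combinatorial_nullstellensatz_zero_one (F : Type*) [Field F] (n : ℕ)
    (f : MvPolynomial (Fin n) F)
    (hdeg : f.totalDegree = n)
    (hcoeff : MvPolynomial.coeff (∑ i : Fin n, Finsupp.single i 1) f ≠ 0) :
    ∃ s : Fin n → F, (∀ i, s i = 0 ∨ s i = 1) ∧ MvPolynomial.eval s f ≠ 0 := by
  by_contra hcon
  push_neg at hcon
  set m : Fin n →₀ ℕ := ∑ i : Fin n, Finsupp.single i 1 with hm
  have hmi : ∀ i, m i = 1 := by
    intro i
    simp [hm, Finsupp.finset_sum_apply, Finsupp.single_apply]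
  apply hcoeff
  have key :
      (∑ t : Fin n → Bool, (∏ i, if t i then (1:F) else -1) *
        eval (fun i => if t i then (1:F) else 0) f) = coeff m f := by
    have step1 : ∀ t : Fin n → Bool,
        (∏ i, if t i then (1:F) else -1) * eval (fun i => if t i then (1:F) else 0) f
        = ∑ d ∈ f.support, coeff d f *
            ∏ i, ((if t i then (1:F) else -1) * (if t i then (1:F) else 0) ^ d i) := by
      intro t
      rw [eval_eq', Finset.mul_sum]
      refine Finset.sum_congr rfl fun d _ => ?_
      rw [Finset.prod_mul_distrib]
      ring
    simp_rw [step1]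
    rw [Finset.sum_comm]
    have step2 : ∀ d : Fin n →₀ ℕ,
        (∑ t : Fin n → Bool, coeff d f *
          ∏ i, ((if t i then (1:F) else -1) * (if t i then (1:F) else 0) ^ d i))
        = coeff d f * ∏ i, (if d i = 0 then (0:F) else 1) := by
      intro d
      rw [← Finset.mul_sum, ← Fintype.prod_sum
        (fun (i : Fin n) (b : Bool) => (if b then (1:F) else -1) * (if b then (1:F) else 0) ^ d i)]
      congr 1
      refine Finset.prod_congr rfl fun i _ => ?_
      rcases Nat.eq_zero_or_pos (d i) with h | h
      · simp [h]
      · simp [Fintype.sum_bool, zero_pow h.ne', h.ne']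
    simp_rw [step2]
    have step3 : ∀ d ∈ f.support,
        coeff d f * ∏ i, (if d i = 0 then (0:F) else 1)
        = if d = m then coeff m f else 0 := by
      intro d hd
      by_cases hall : ∀ i, d i ≠ 0
      · have hdm : d = m := by
          have hle : ∀ i, 1 ≤ d i := fun i => Nat.one_le_iff_ne_zero.2 (hall i)
          have hsum : ∑ i, d i ≤ n := by
            have := MvPolynomial.le_totalDegree hd
            rw [hdeg] at this
            calc ∑ i, d i = d.sum fun _ e => e := by
                  rw [Finsupp.sum_fintype]; simp
              _ ≤ n := this
          have hge : n ≤ ∑ i, d i := by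
            calc n = ∑ _i : Fin n, 1 := by simp
              _ ≤ ∑ i, d i := Finset.sum_le_sum fun i _ => hle i
          have hsimp : ∑ _i : Fin n, 1 = ∑ i, d i := by
            have hn : n = ∑ _i : Fin n, 1 := by simp
            omega
          have heq : ∀ i ∈ Finset.univ, 1 = d i :=
            (Finset.sum_eq_sum_iff_of_le (fun i _ => hle i)).1 hsimp
          ext i
          rw [← heq i (Finset.mem_univ i), hmi i]
        rw [if_pos hdm, hdm]
        simp [hmi]
      · push_neg at hall
        obtain ⟨j, hj⟩ := hall
        have hdm : d ≠ m := fun h => by rw [h, hmi j] at hj; omega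
        rw [if_neg hdm, Finset.prod_eq_zero (Finset.mem_univ j) (by simp [hj]), mul_zero]
    calc (∑ d ∈ f.support, coeff d f * ∏ i, (if d i = 0 then (0:F) else 1))
        = ∑ d ∈ f.support, if d = m then coeff m f else 0 := Finset.sum_congr rfl step3
      _ = coeff m f := by
          rw [Finset.sum_ite_eq' f.support m (fun _ => coeff m f)]
          by_cases hm' : m ∈ f.support
          · simp [hm']
          · simp only [hm', if_false]
            exact (MvPolynomial.notMem_support_iff.1 hm').symm
  rw [← key]
  apply Finset.sum_eq_zero
  intro t _
  rw [hcon (fun i => if t i then (1:F) else 0) (fun i => by by_cases h : t i <;> simp [h]),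
    mul_zero]
end

section
/- Let F be a field, let f be a polynomial in F[x_1, ..., x_n] of total degree at most n, and let c be the coefficient of the monomial x_1·x_2···x_n in f. Then the alternating sum over all (x_1, ..., x_n) in {0,1}^n of (-1)^{x_1 + ... + x_n} · f(x_1, ..., x_n) equals (-1)^n · c. -/
open MvPolynomial

/-- For `f ∈ F[x₁,…,xₙ]` of total degree at most `n` with `c` the coefficient of
`x₁⋯xₙ`, the alternating sum over `{0,1}ⁿ` of `(-1)^{x₁+⋯+xₙ} f(x₁,…,xₙ)` equals
`(-1)ⁿ c`. -/
theorem alternating_sum_eval_eq_top_coeff (F : Type*) [Field F] (n : ℕ)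
    (f : MvPolynomial (Fin n) F) (hdeg : f.totalDegree ≤ n)
    (c : F) (hc : c = MvPolynomial.coeff (∑ i : Fin n, Finsupp.single i 1) f) :
    ∑ ε : Fin n → Bool,
      (-1 : F) ^ (Finset.univ.filter fun j => ε j).card *
        MvPolynomial.eval (fun i => if ε i then (1 : F) else 0) f
      = (-1 : F) ^ n * c := by
  classical
  set ones : Fin n →₀ ℕ := ∑ i : Fin n, Finsupp.single i 1 with hones
  have hones_app : ∀ i, ones i = 1 := by
    intro i
    simp [hones, Finsupp.finset_sum_apply, Finsupp.single_apply]
  -- rewrite eval as sum over support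
  have heval : ∀ ε : Fin n → Bool,
      MvPolynomial.eval (fun i => if ε i then (1:F) else 0) f
        = ∑ d ∈ f.support, MvPolynomial.coeff d f
            * ∏ i, (if ε i then (1:F) else 0) ^ d i := by
    intro ε
    rw [MvPolynomial.eval_eq' _ f]
  -- the sign as a product
  have hsign : ∀ ε : Fin n → Bool,
      (-1 : F) ^ (Finset.univ.filter fun j => ε j).card
        = ∏ i, (if ε i then (-1:F) else 1) := by
    intro ε
    rw [← Finset.prod_const, Finset.prod_filter]
  calc ∑ ε : Fin n → Bool,
      (-1 : F) ^ (Finset.univ.filter fun j => ε j).card *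
        MvPolynomial.eval (fun i => if ε i then (1 : F) else 0) f
      = ∑ d ∈ f.support, MvPolynomial.coeff d f *
          ∑ ε : Fin n → Bool, ∏ i,
            ((if ε i then (-1:F) else 1) * (if ε i then (1:F) else 0) ^ d i) := by
        have h1 : ∀ ε : Fin n → Bool,
            (-1 : F) ^ (Finset.univ.filter fun j => ε j).card *
              MvPolynomial.eval (fun i => if ε i then (1 : F) else 0) f
            = ∑ d ∈ f.support, MvPolynomial.coeff d f * ∏ i,
                ((if ε i then (-1:F) else 1) * (if ε i then (1:F) else 0) ^ d i) := by
          intro ε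
          rw [heval, Finset.mul_sum]
          refine Finset.sum_congr rfl fun d _ => ?_
          rw [hsign, Finset.prod_mul_distrib]
          ring
        simp only [h1]
        rw [Finset.sum_comm]
        simp only [Finset.mul_sum]
    _ = ∑ d ∈ f.support, MvPolynomial.coeff d f *
          ∏ i, ((-1 : F) + (0:F) ^ d i) := by
        refine Finset.sum_congr rfl fun d _ => ?_
        congr 1
        rw [← Fintype.prod_sum fun i (b : Bool) =>
              (if b then (-1:F) else 1) * (if b then (1:F) else 0) ^ d i]
        refine Finset.prod_congr rfl fun i _ => ?_
        rw [Fintype.sum_bool]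
        simp
    _ = (-1 : F) ^ n * c := by
        have hzero : ∀ d ∈ f.support, d ≠ ones →
            MvPolynomial.coeff d f * ∏ i, ((-1:F) + (0:F) ^ d i) = 0 := by
          intro d hd hne
          by_cases hall : ∀ i, d i ≠ 0
          · exfalso
            apply hne
            have hsum : (∑ i, d i) ≤ n := by
              have : (∑ i, d i) = d.sum fun _ e => e := by
                rw [Finsupp.sum_fintype]
                intro _; rfl
              rw [this]
              exact le_trans (MvPolynomial.le_totalDegree hd) hdeg
            have hle : ∀ i ∈ Finset.univ, 1 ≤ d i := fun i _ =>
              Nat.one_le_iff_ne_zero.mpr (hall i)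
            have hsum1 : (∑ _i : Fin n, 1) = ∑ i, d i := by
              refine le_antisymm (Finset.sum_le_sum hle) ?_
              simpa using hsum
            have hall1 := (Finset.sum_eq_sum_iff_of_le hle).mp hsum1
            ext i
            rw [hones_app, ← hall1 i (Finset.mem_univ i)]
          · push_neg at hall
            obtain ⟨i, hi⟩ := hall
            rw [Finset.prod_eq_zero (Finset.mem_univ i), mul_zero]
            simp [hi]
        rw [Finset.sum_eq_single ones hzero (fun h => by
          rw [MvPolynomial.notMem_support_iff.mp h, zero_mul]), hc]
        have : (∏ i : Fin n, ((-1:F) + (0:F) ^ ones i)) = (-1:F) ^ n := by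
          simp [hones_app]
        rw [this, mul_comm]
end

section
/- Let p be an odd prime and let f in F_p[x_1, ..., x_{p+1}] be the polynomial f(x_1, ..., x_{p+1}) = (x_1 + x_2 + ... + x_p)^{p-1} · (x_1 + 2x_2 + 3x_3 + ... + p·x_p + x_{p+1})^{p-1}. Then the iterated partial derivative of f with respect to each of the p+1 variables once, g = ∂^{p+1} f / (∂x_1 ∂x_2 ··· ∂x_{p+1}), is identically zero as a polynomial over F_p. -/
open MvPolynomial

namespace IterAux

variable {σ : Type*} {R : Type*} [CommRing R]

/-- iterated partial derivative along a list of variables -/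
noncomputable def Dl (l : List σ) (q : MvPolynomial σ R) : MvPolynomial σ R :=
  l.foldl (fun q i => MvPolynomial.pderiv i q) q

@[simp] lemma Dl_nil (q : MvPolynomial σ R) : Dl ([] : List σ) q = q := rfl

@[simp] lemma Dl_cons (i : σ) (l : List σ) (q : MvPolynomial σ R) :
    Dl (i :: l) q = Dl l (pderiv i q) := rfl

lemma Dl_add (l : List σ) (q r : MvPolynomial σ R) : Dl l (q + r) = Dl l q + Dl l r := by
  induction l generalizing q r with
  | nil => rfl
  | cons i l ih => simp only [Dl_cons, map_add, ih]

lemma Dl_C_mul (l : List σ) (c : R) (q : MvPolynomial σ R) :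
    Dl l (C c * q) = C c * Dl l q := by
  induction l generalizing q with
  | nil => rfl
  | cons i l ih => simp only [Dl_cons, pderiv_C_mul, ih]

lemma pderiv_pow_of_const {i : σ} {A : MvPolynomial σ R} {c : R} (h : pderiv i A = C c) (m : ℕ) :
    pderiv i (A ^ m) = C ((m : R) * c) * A ^ (m - 1) := by
  rw [pderiv_pow, h, map_mul, map_natCast]
  ring

lemma desc_succ (m k : ℕ) : m.descFactorial (k + 1) = m * (m - 1).descFactorial k := by
  cases m with
  | zero => simp
  | succ m => rw [Nat.succ_descFactorial_succ]; simp

lemma lin_mul_coeff_zero (c d : R) (q : Polynomial R) :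
    ((Polynomial.C c * Polynomial.X + Polynomial.C d) * q).coeff 0 = d * q.coeff 0 := by
  simp [Polynomial.mul_coeff_zero]

lemma lin_mul_coeff_succ (c d : R) (q : Polynomial R) (k : ℕ) :
    ((Polynomial.C c * Polynomial.X + Polynomial.C d) * q).coeff (k + 1)
      = c * q.coeff k + d * q.coeff (k + 1) := by
  rw [add_mul, Polynomial.coeff_add, mul_assoc, Polynomial.coeff_C_mul,
    Polynomial.coeff_X_mul, Polynomial.coeff_C_mul]

lemma coeff_map_prod_eq_zero (a b : σ → R) (l : List σ) {k : ℕ} (hk : l.length < k) :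
    ((l.map fun i => Polynomial.C (a i) * Polynomial.X + Polynomial.C (b i)).prod).coeff k
      = 0 := by
  apply Polynomial.coeff_eq_zero_of_natDegree_lt
  calc (l.map fun i => Polynomial.C (a i) * Polynomial.X + Polynomial.C (b i)).prod.natDegree
      ≤ ((l.map fun i => Polynomial.C (a i) * Polynomial.X + Polynomial.C (b i)).map
          Polynomial.natDegree).sum := Polynomial.natDegree_list_prod_le _
    _ ≤ ((l.map fun i => Polynomial.C (a i) * Polynomial.X + Polynomial.C (b i)).map
          Polynomial.natDegree).length • 1 := by
        apply List.sum_le_card_nsmul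
        intro x hx
        simp only [List.map_map, List.mem_map, Function.comp_apply] at hx
        obtain ⟨i, hi, rfl⟩ := hx
        exact Polynomial.natDegree_linear_le
    _ = l.length := by simp
    _ < k := hk

lemma key (a b : σ → R) (A B : MvPolynomial σ R)
    (ha : ∀ i, pderiv i A = C (a i)) (hb : ∀ i, pderiv i B = C (b i))
    (l : List σ) (m n : ℕ) :
    Dl l (A ^ m * B ^ n) =
      ∑ k ∈ Finset.range (l.length + 1),
        C (((l.map fun i => Polynomial.C (a i) * Polynomial.X + Polynomial.C (b i)).prod.coeff k)
            * (m.descFactorial k : R) * (n.descFactorial (l.length - k) : R))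
          * A ^ (m - k) * B ^ (n - (l.length - k)) := by
  induction l generalizing m n with
  | nil => simp
  | cons i l ih =>
    set P' : Polynomial R :=
      (l.map fun i => Polynomial.C (a i) * Polynomial.X + Polynomial.C (b i)).prod with hP'
    set L := l.length with hL
    -- the two families of terms
    set Ta : ℕ → MvPolynomial σ R := fun k =>
      C (a i * P'.coeff k * (m.descFactorial (k + 1) : R) * (n.descFactorial (L - k) : R))
        * A ^ (m - (k + 1)) * B ^ (n - (L - k)) with hTa
    set Tb : ℕ → MvPolynomial σ R := fun k =>
      C (b i * P'.coeff k * (m.descFactorial k : R) * (n.descFactorial (L + 1 - k) : R))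
        * A ^ (m - k) * B ^ (n - (L + 1 - k)) with hTb
    have hD : Dl (i :: l) (A ^ m * B ^ n)
        = C ((m : R) * a i) * Dl l (A ^ (m - 1) * B ^ n)
          + C ((n : R) * b i) * Dl l (A ^ m * B ^ (n - 1)) := by
      rw [Dl_cons, pderiv_mul, pderiv_pow_of_const (ha i), pderiv_pow_of_const (hb i),
        show C ((m : R) * a i) * A ^ (m - 1) * B ^ n + A ^ m * (C ((n : R) * b i) * B ^ (n - 1))
          = C ((m : R) * a i) * (A ^ (m - 1) * B ^ n)
            + C ((n : R) * b i) * (A ^ m * B ^ (n - 1)) by ring,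
        Dl_add, Dl_C_mul, Dl_C_mul]
    have hlen : (i :: l).length = L + 1 := rfl
    have hmap : ((i :: l).map fun i => Polynomial.C (a i) * Polynomial.X + Polynomial.C (b i)).prod
        = (Polynomial.C (a i) * Polynomial.X + Polynomial.C (b i)) * P' := by
      simp [hP']
    rw [hD, ih, ih, hlen, hmap]
    -- rewrite RHS
    conv_rhs => rw [Finset.sum_range_succ']
    have hT0 : C (((Polynomial.C (a i) * Polynomial.X + Polynomial.C (b i)) * P').coeff 0
          * (m.descFactorial 0 : R) * (n.descFactorial (L + 1 - 0) : R))
          * A ^ (m - 0) * B ^ (n - (L + 1 - 0)) = Tb 0 := by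
      rw [lin_mul_coeff_zero]
      try simp [hTb]
    have hTsucc : ∀ k, C (((Polynomial.C (a i) * Polynomial.X + Polynomial.C (b i)) * P').coeff
            (k + 1) * (m.descFactorial (k + 1) : R) * (n.descFactorial (L + 1 - (k + 1)) : R))
          * A ^ (m - (k + 1)) * B ^ (n - (L + 1 - (k + 1))) = Ta k + Tb (k + 1) := by
      intro k
      rw [lin_mul_coeff_succ]
      have e1 : L + 1 - (k + 1) = L - k := by omega
      simp only [hTa, hTb, e1]
      rw [show (a i * P'.coeff k + b i * P'.coeff (k + 1)) * (m.descFactorial (k + 1) : R)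
            * (n.descFactorial (L - k) : R)
          = a i * P'.coeff k * (m.descFactorial (k + 1) : R) * (n.descFactorial (L - k) : R)
            + b i * P'.coeff (k + 1) * (m.descFactorial (k + 1) : R)
              * (n.descFactorial (L - k) : R) by ring, map_add, add_mul, add_mul]
    simp only [hTsucc, hT0]
    rw [Finset.sum_add_distrib]
    have hTbsum : (∑ k ∈ Finset.range (L + 1), Tb (k + 1)) + Tb 0
        = ∑ k ∈ Finset.range (L + 1), Tb k := by
      rw [← Finset.sum_range_succ' Tb (L + 1), Finset.sum_range_succ]
      have hc : P'.coeff (L + 1) = 0 := coeff_map_prod_eq_zero a b l (by omega)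
      have : Tb (L + 1) = 0 := by simp [hTb, hc]
      rw [this, add_zero]
    rw [add_assoc, hTbsum]
    congr 1
    · -- a-part
      rw [Finset.mul_sum]
      apply Finset.sum_congr rfl
      intro k hk
      have hsc : a i * P'.coeff k * (m.descFactorial (k + 1) : R) * (n.descFactorial (L - k) : R)
          = (m : R) * a i * (P'.coeff k * ((m - 1).descFactorial k : R)
              * (n.descFactorial (L - k) : R)) := by
        rw [desc_succ]; push_cast; ring
      have e1 : m - 1 - k = m - (k + 1) := by omega
      simp only [hTa]
      rw [← mul_assoc, ← mul_assoc, ← map_mul, hsc, e1]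
    · -- b-part
      rw [Finset.mul_sum]
      apply Finset.sum_congr rfl
      intro k hk
      rw [Finset.mem_range] at hk
      have hkL : k ≤ L := by omega
      have hsc : b i * P'.coeff k * (m.descFactorial k : R) * (n.descFactorial (L + 1 - k) : R)
          = (n : R) * b i * (P'.coeff k * (m.descFactorial k : R)
              * ((n - 1).descFactorial (L - k) : R)) := by
        rw [show L + 1 - k = (L - k) + 1 by omega, desc_succ]; push_cast; ring
      have e1 : n - 1 - (L - k) = n - (L + 1 - k) := by omega
      simp only [hTb]
      rw [← mul_assoc, ← mul_assoc, ← map_mul, hsc, e1]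

end IterAux

/-- For an odd prime `p`, the iterated formal partial derivative, once in each of the
`p+1` variables, of the polynomial
`f = (x₁ + ⋯ + x_p)^{p-1} · (x₁ + 2x₂ + ⋯ + p·x_p + x_{p+1})^{p-1}` over `F_p`
is identically zero.  Variables are indexed by `Fin (p+1)`; the coefficient of `x_i`
in the second factor is `i mod p` for `1 ≤ i ≤ p` and `1 ≡ p + 1` for `x_{p+1}`. -/
theorem iterated_pderiv_eq_zero (p : ℕ) (hp : p.Prime) (hodd : Odd p)
    (f : MvPolynomial (Fin (p + 1)) (ZMod p))
    (hf : f =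
      (∑ i ∈ Finset.univ.filter (fun i : Fin (p + 1) => (i : ℕ) < p), X i) ^ (p - 1) *
      (∑ i : Fin (p + 1), C (((i : ℕ) + 1 : ℕ) : ZMod p) * X i) ^ (p - 1)) :
    (List.finRange (p + 1)).foldl (fun q i => MvPolynomial.pderiv i q) f = 0 := by
  classical
  haveI : Fact p.Prime := ⟨hp⟩
  haveI : NeZero p := ⟨by have := hp.two_le; omega⟩
  have hpne2 : p ≠ 2 := by rintro rfl; revert hodd; decide
  have hp3 : 3 ≤ p := by have := hp.two_le; omega
  set a : Fin (p + 1) → ZMod p := fun i => if (i : ℕ) < p then 1 else 0 with ha_def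
  set b : Fin (p + 1) → ZMod p := fun i => (((i : ℕ) + 1 : ℕ) : ZMod p) with hb_def
  set A : MvPolynomial (Fin (p + 1)) (ZMod p) :=
    ∑ i ∈ Finset.univ.filter (fun i : Fin (p + 1) => (i : ℕ) < p), X i with hA_def
  set B : MvPolynomial (Fin (p + 1)) (ZMod p) :=
    ∑ i : Fin (p + 1), C (((i : ℕ) + 1 : ℕ) : ZMod p) * X i with hB_def
  have ha : ∀ i, pderiv i A = C (a i) := by
    intro i
    rw [hA_def, map_sum]
    by_cases h : (i : ℕ) < p
    · rw [Finset.sum_eq_single i]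
      · simp [ha_def, h]
      · intro j _ hne; exact pderiv_X_of_ne hne
      · intro hni; exact absurd (Finset.mem_filter.mpr ⟨Finset.mem_univ i, h⟩) hni
    · rw [Finset.sum_eq_zero]
      · simp [ha_def, h]
      · intro j hj
        have hne : j ≠ i := by rintro rfl; exact h (Finset.mem_filter.mp hj).2
        exact pderiv_X_of_ne hne
  have hb : ∀ i, pderiv i B = C (b i) := by
    intro i
    rw [hB_def, map_sum]
    rw [Finset.sum_eq_single i]
    · rw [pderiv_C_mul, pderiv_X_self, mul_one, hb_def]
    · intro j _ hne; rw [pderiv_C_mul, pderiv_X_of_ne hne, mul_zero]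
    · intro h; exact absurd (Finset.mem_univ i) h
  have hcard : Fintype.card (ZMod p) = p := ZMod.card p
  have hq : 1 < Fintype.card (ZMod p) := by omega
  -- the coefficient-generating polynomial is X^p - X
  have hprod : ((List.finRange (p + 1)).map
        fun i => Polynomial.C (a i) * Polynomial.X + Polynomial.C (b i)).prod
      = Polynomial.X ^ p - Polynomial.X := by
    have h1 : ((List.finRange (p + 1)).map
          fun i => Polynomial.C (a i) * Polynomial.X + Polynomial.C (b i)).prod
        = ∏ i : Fin (p + 1), (Polynomial.C (a i) * Polynomial.X + Polynomial.C (b i)) := by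
      rw [Fin.prod_univ_def]
    rw [h1, Fin.prod_univ_castSucc]
    have hlast : Polynomial.C (a (Fin.last p)) * Polynomial.X + Polynomial.C (b (Fin.last p))
        = 1 := by
      have h2 : ¬ ((Fin.last p : Fin (p + 1)) : ℕ) < p := by simp [Fin.val_last]
      simp [ha_def, hb_def, Fin.val_last, h2, ZMod.natCast_self]
    rw [hlast, mul_one]
    set g : Fin p → ZMod p := fun i => -(((i : ℕ) : ZMod p) + 1) with hg_def
    have hfac : ∀ i : Fin p,
        Polynomial.C (a i.castSucc) * Polynomial.X + Polynomial.C (b i.castSucc)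
        = Polynomial.X - Polynomial.C (g i) := by
      intro i
      have h3 : ((i.castSucc : Fin (p + 1)) : ℕ) = (i : ℕ) := rfl
      have h4 : (i : ℕ) < p := i.isLt
      simp [ha_def, hb_def, hg_def, h3, h4, sub_neg_eq_add]
      ring
    rw [Finset.prod_congr rfl fun i _ => hfac i]
    have hginj : Function.Injective g := by
      intro i j hij
      rw [hg_def] at hij
      simp only [neg_inj, add_left_inj] at hij
      have : ((i : ℕ) : ZMod p).val = ((j : ℕ) : ZMod p).val := by rw [hij]
      rw [ZMod.val_cast_of_lt i.isLt, ZMod.val_cast_of_lt j.isLt] at this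
      exact Fin.ext this
    have hgbij : Function.Bijective g := by
      rw [Fintype.bijective_iff_injective_and_card]
      exact ⟨hginj, by simp [hcard]⟩
    rw [Fintype.prod_bijective g hgbij (fun i : Fin p => Polynomial.X - Polynomial.C (g i))
      (fun c : ZMod p => Polynomial.X - Polynomial.C c) (fun i => rfl)]
    have hmon : (Polynomial.X ^ (Fintype.card (ZMod p)) - Polynomial.X : Polynomial (ZMod p)).Monic :=
      Polynomial.monic_X_pow_sub (by rw [Polynomial.degree_X]; exact_mod_cast hq)
    have hroots := FiniteField.roots_X_pow_card_sub_X (ZMod p)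
    have hmain := Polynomial.prod_multiset_X_sub_C_of_monic_of_roots_card_eq hmon
      (by rw [hroots, FiniteField.X_pow_card_sub_X_natDegree_eq _ hq]
          exact Finset.card_univ)
    rw [hroots] at hmain
    rw [Finset.prod_eq_multiset_prod]
    rw [hmain, hcard]
  -- apply the key lemma and kill every term
  rw [hf]
  show IterAux.Dl (List.finRange (p + 1)) (A ^ (p - 1) * B ^ (p - 1)) = 0
  rw [IterAux.key a b A B ha hb]
  simp only [List.length_finRange, hprod]
  apply Finset.sum_eq_zero
  intro k hk
  rw [Finset.mem_range] at hk
  rcases lt_or_ge k 2 with hk2 | hk2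
  · have h0 : (p - 1).descFactorial (p + 1 - k) = 0 :=
      Nat.descFactorial_eq_zero_iff_lt.mpr (by omega)
    rw [h0]
    simp
  · rcases lt_or_ge k p with hkp | hkp
    · have hc : (Polynomial.X ^ p - Polynomial.X : Polynomial (ZMod p)).coeff k = 0 := by
        rw [Polynomial.coeff_sub, Polynomial.coeff_X_pow, Polynomial.coeff_X,
          if_neg (by omega), if_neg (by omega)]
        ring
      rw [hc]
      simp
    · have h0 : (p - 1).descFactorial k = 0 :=
        Nat.descFactorial_eq_zero_iff_lt.mpr (by omega)
      rw [h0]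
      simp
end

section
/- Let p be an odd prime and let a_1, ..., a_{p+1} be nonzero elements of F_p. Define Q in F_p[x_1, ..., x_{p+1}] by Q(x_1, ..., x_{p+1}) = (a_1 x_1 + a_2 x_2 + ... + a_p x_p)^{p-1} · (a_1 x_1 + 2 a_2 x_2 + ... + p a_p x_p + a_{p+1} x_{p+1})^{p-1}. Then the alternating sum over all (x_1, ..., x_{p+1}) in {0,1}^{p+1} of (-1)^{x_1 + ... + x_{p+1}} · Q(x_1, ..., x_{p+1}) equals 0 in F_p. -/
open MvPolynomial

/-!
Over `F_q`, `x ^ (q - 1)` is the indicator of `x ≠ 0`, so `Q` evaluates to `[u ≠ 0][v ≠ 0]`, where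
`u, v` are the two linear forms.  An alternating sum over the cube vanishes on any function that
ignores one coordinate.  This kills `1`, `[u = 0]` (`u` ignores `x_{p+1}`) and `[v = 0]`.  For the
remaining term `[u = 0 ∧ v = 0]`, count the members of the pencil `v + j u` (`j ∈ F_p`) vanishing
at a point, in `ℤ`: there are `[u ≠ 0] + p [u = 0 ∧ v = 0]` of them.  Each `v + j u` misses the
variable `x_i` with `i + j ≡ 0`, so after multiplying by `p` this term is also an alternating sum
of functions that each ignore a coordinate.
-/

open Finset

theorem DependsOn.comp_left {ι β γ : Type*} {α : ι → Type*} {f : (Π i, α i) → β} {s : Set ι}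
    (hf : DependsOn f s) (g : β → γ) : DependsOn (fun x => g (f x)) s :=
  fun _ _ hxy => congrArg g (hf hxy)

section Cube

variable {ι R : Type*} [Fintype ι] [CommRing R]

theorem dependsOn_dotProduct_comp {α : Type*} (w : ι → R) (g : α → R) {k : ι} (hk : w k = 0) :
    DependsOn (fun x : ι → α => w ⬝ᵥ fun i => g (x i)) {k}ᶜ := by
  intro x y hxy
  refine sum_congr rfl fun i _ => ?_
  by_cases hi : i = k
  · simp [hi, hk]
  · simp only [hxy i hi]

variable [DecidableEq ι]

theorem neg_one_pow_card_filter_update_not (ε : ι → Bool) (k : ι) :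
    (-1 : R) ^ #{j | Function.update ε k (!ε k) j} = -(-1 : R) ^ #{j | ε j} := by
  simp only [← prod_const, prod_filter, Fintype.prod_eq_mul_prod_compl k, Function.update_self]
  rw [prod_congr rfl fun j hj => by rw [Function.update_of_ne (by simpa using hj)]]
  cases ε k <;> simp

theorem sum_neg_one_pow_card_mul_eq_zero_of_dependsOn {g : (ι → Bool) → R} {k : ι}
    (hg : DependsOn g {k}ᶜ) : ∑ ε : ι → Bool, (-1 : R) ^ #{j | ε j} * g ε = 0 := by
  refine sum_ninvolution (fun ε => Function.update ε k (!ε k)) (fun ε => ?_)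
    (fun ε _ h => by simpa using congrFun h k) (fun _ => mem_univ _)
    (fun ε => by simp)
  rw [neg_one_pow_card_filter_update_not,
    hg (x := Function.update ε k (!ε k)) fun i hi => Function.update_of_ne (by simpa using hi) _ _]
  ring

end Cube

section FiniteField

variable {F : Type*} [Field F] [Fintype F] [DecidableEq F]

theorem card_filter_add_mul_eq_zero (u v : F) :
    #{j : F | v + j * u = 0} = if u = 0 then (if v = 0 then Fintype.card F else 0) else 1 := by
  by_cases hu : u = 0
  · by_cases hv : v = 0 <;> simp [hu, hv]
  · rw [if_neg hu, card_eq_one]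
    refine ⟨-v / u, ?_⟩
    ext j
    simp only [mem_filter, mem_univ, true_and, mem_singleton]
    constructor
    · intro h; field_simp; linear_combination h
    · rintro rfl; field_simp; ring

variable {ι : Type*} [Fintype ι] [DecidableEq ι]

theorem sum_neg_one_pow_card_mul_ite_and_eq_zero {u v : (ι → Bool) → F} {k : ι}
    (hu : DependsOn u {k}ᶜ) (hpencil : ∀ j : F, ∃ k, DependsOn (fun ε => v ε + j * u ε) {k}ᶜ) :
    ∑ ε : ι → Bool, (-1 : ℤ) ^ #{i | ε i} * (if u ε = 0 ∧ v ε = 0 then 1 else 0) = 0 := by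
  have hcount : ∀ ε, (Fintype.card F : ℤ) * (if u ε = 0 ∧ v ε = 0 then 1 else 0) =
      ∑ j : F, (if v ε + j * u ε = 0 then 1 else 0) - (if u ε = 0 then 0 else 1) := by
    intro ε
    rw [sum_boole, card_filter_add_mul_eq_zero]
    by_cases hu : u ε = 0 <;> by_cases hv : v ε = 0 <;> simp [hu, hv]
  have hpencil_sum : ∀ j : F, ∑ ε : ι → Bool,
      (-1 : ℤ) ^ #{i | ε i} * (if v ε + j * u ε = 0 then 1 else 0) = 0 := by
    intro j
    obtain ⟨k, hk⟩ := hpencil j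
    exact sum_neg_one_pow_card_mul_eq_zero_of_dependsOn
      (hk.comp_left fun t => if t = 0 then 1 else 0)
  have hu_sum := sum_neg_one_pow_card_mul_eq_zero_of_dependsOn
    (hu.comp_left fun t => if t = 0 then (0 : ℤ) else 1)
  refine mul_left_cancel₀ (Nat.cast_ne_zero.mpr (Fintype.card_ne_zero (α := F))) ?_
  rw [mul_zero, mul_sum]
  simp_rw [mul_left_comm _ ((-1 : ℤ) ^ _), hcount, mul_sub, mul_sum]
  rw [sum_sub_distrib, sum_comm, sum_eq_zero fun j _ => hpencil_sum j, hu_sum, sub_zero]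

theorem sum_neg_one_pow_card_mul_pow_mul_pow_eq_zero {u v : (ι → Bool) → F} {k : ι}
    (hu : DependsOn u {k}ᶜ) (hpencil : ∀ j : F, ∃ k, DependsOn (fun ε => v ε + j * u ε) {k}ᶜ) :
    ∑ ε : ι → Bool, (-1 : F) ^ #{i | ε i} *
      (u ε ^ (Fintype.card F - 1) * v ε ^ (Fintype.card F - 1)) = 0 := by
  obtain ⟨l, hv⟩ : ∃ l, DependsOn v {l}ᶜ := by simpa using hpencil 0
  have hpow (x : F) : x ^ (Fintype.card F - 1) = if x = 0 then 0 else 1 := by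
    split_ifs with hx
    · rw [hx, zero_pow (Nat.sub_ne_zero_of_lt Fintype.one_lt_card)]
    · exact FiniteField.pow_card_sub_one_eq_one x hx
  have hone := sum_neg_one_pow_card_mul_eq_zero_of_dependsOn (R := ℤ)
    ((dependsOn_const (1 : ℤ)).mono (Set.empty_subset {k}ᶜ))
  have hu_sum := sum_neg_one_pow_card_mul_eq_zero_of_dependsOn
    (hu.comp_left fun t => if t = 0 then (1 : ℤ) else 0)
  have hv_sum := sum_neg_one_pow_card_mul_eq_zero_of_dependsOn
    (hv.comp_left fun t => if t = 0 then (1 : ℤ) else 0)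
  have huv_sum := sum_neg_one_pow_card_mul_ite_and_eq_zero hu hpencil
  -- inclusion–exclusion: `[u ≠ 0 ∧ v ≠ 0] = 1 - [u = 0] - [v = 0] + [u = 0 ∧ v = 0]`
  calc ∑ ε : ι → Bool, (-1 : F) ^ #{i | ε i} *
        (u ε ^ (Fintype.card F - 1) * v ε ^ (Fintype.card F - 1))
      = ((∑ ε : ι → Bool, (-1 : ℤ) ^ #{i | ε i} * (1 - (if u ε = 0 then 1 else 0)
          - (if v ε = 0 then 1 else 0) + (if u ε = 0 ∧ v ε = 0 then 1 else 0)) : ℤ) : F) := by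
        push_cast
        refine sum_congr rfl fun ε _ => ?_
        rw [hpow, hpow]
        by_cases hu : u ε = 0 <;> by_cases hv : v ε = 0 <;> simp [hu, hv]
    _ = 0 := by
        simp only [mul_add, mul_sub, sum_add_distrib, sum_sub_distrib, hone, hu_sum, hv_sum,
          huv_sum]
        simp

end FiniteField

theorem alternating_sum_Q_eq_zero_general (p : ℕ) (hp : p.Prime)
    (a : Fin (p + 1) → ZMod p)
    (Q : MvPolynomial (Fin (p + 1)) (ZMod p))
    (hQ : Q =
      (∑ i ∈ Finset.univ.filter (fun i : Fin (p + 1) => (i : ℕ) < p), C (a i) * X i) ^ (p - 1) *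
      (∑ i : Fin (p + 1), C ((((i : ℕ) + 1 : ℕ) : ZMod p) * a i) * X i) ^ (p - 1)) :
    ∑ ε : Fin (p + 1) → Bool,
      (-1 : ZMod p) ^ (Finset.univ.filter fun j => ε j).card *
        MvPolynomial.eval (fun i => if ε i then (1 : ZMod p) else 0) Q = 0 := by
  have : Fact p.Prime := ⟨hp⟩
  let w₁ : Fin (p + 1) → ZMod p := fun i => if (i : ℕ) < p then a i else 0
  let w₂ : Fin (p + 1) → ZMod p := fun i => (((i : ℕ) + 1 : ℕ) : ZMod p) * a i
  let x (ε : Fin (p + 1) → Bool) (i : Fin (p + 1)) : ZMod p := if ε i then 1 else 0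
  have heval (ε : Fin (p + 1) → Bool) : eval (fun i => if ε i then (1 : ZMod p) else 0) Q =
      (w₁ ⬝ᵥ x ε) ^ (p - 1) * (w₂ ⬝ᵥ x ε) ^ (p - 1) := by
    simp only [hQ, map_mul, map_pow, map_sum, eval_C, eval_X, sum_filter, apply_ite (eval _),
      map_zero, dotProduct, w₁, w₂, ite_mul, zero_mul, x]
  have hu : DependsOn (fun ε => w₁ ⬝ᵥ x ε) {Fin.last p}ᶜ :=
    dependsOn_dotProduct_comp w₁ (fun b : Bool => if b then 1 else 0) (by simp [w₁])
  -- for `i < p` the coefficient of `xᵢ` in `v + j u` is `(i + 1 + j) aᵢ`, zero at `i = -1 - j`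
  have hpencil (j : ZMod p) :
      ∃ k, DependsOn (fun ε => w₂ ⬝ᵥ x ε + j * w₁ ⬝ᵥ x ε) {k}ᶜ := by
    refine ⟨⟨(-1 - j).val, (ZMod.val_lt _).trans p.lt_succ_self⟩, ?_⟩
    simp_rw [← smul_eq_mul, ← smul_dotProduct, ← add_dotProduct]
    refine dependsOn_dotProduct_comp _ (fun b : Bool => if b then 1 else 0) ?_
    simp only [Pi.add_apply, Pi.smul_apply, smul_eq_mul, w₁, w₂, ZMod.val_lt, if_true,
      Nat.cast_add, ZMod.natCast_val, ZMod.cast_id', id, Nat.cast_one]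
    ring
  simpa only [heval, ZMod.card] using sum_neg_one_pow_card_mul_pow_mul_pow_eq_zero hu hpencil

/-- For an odd prime `p` and nonzero `a₁, …, a_{p+1} ∈ F_p`, the alternating sum over
`{0,1}^{p+1}` of `(-1)^{x₁+⋯+x_{p+1}} Q(x₁,…,x_{p+1})`, where
`Q = (a₁x₁ + ⋯ + a_p x_p)^{p-1} · (a₁x₁ + 2a₂x₂ + ⋯ + p·a_p x_p + a_{p+1}x_{p+1})^{p-1}`,
equals `0` in `F_p`.  Variables are indexed by `Fin (p+1)`; the coefficient of `x_i` in
the second factor is `i·aᵢ mod p` for `1 ≤ i ≤ p` and `a_{p+1}` (as `p+1 ≡ 1`) for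
`x_{p+1}`. -/
theorem alternating_sum_Q_eq_zero (p : ℕ) (hp : p.Prime) (hodd : Odd p)
    (a : Fin (p + 1) → ZMod p) (ha : ∀ i, a i ≠ 0)
    (Q : MvPolynomial (Fin (p + 1)) (ZMod p))
    (hQ : Q =
      (∑ i ∈ Finset.univ.filter (fun i : Fin (p + 1) => (i : ℕ) < p), C (a i) * X i) ^ (p - 1) *
      (∑ i : Fin (p + 1), C ((((i : ℕ) + 1 : ℕ) : ZMod p) * a i) * X i) ^ (p - 1)) :
    ∑ ε : Fin (p + 1) → Bool,
      (-1 : ZMod p) ^ (Finset.univ.filter fun j => ε j).card *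
        MvPolynomial.eval (fun i => if ε i then (1 : ZMod p) else 0) Q = 0 :=
  alternating_sum_Q_eq_zero_general p hp a Q hQ
end
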